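/- arXiv:1906.03661 — 3 statements merged into one kernel-verified Lean document; each statement's English description precedes it below -/
import Mathlib

section
/- If e has constant row means under W (or d has constant row means under U), then the generalized distance covariance collapses to an ordinary covariance: V²(U,W) = E[d(U₁,U₂)·e(W₁,W₂)] − E[d(U₁,U₂)]·E[e(W₁,W₂)] = Cov(d(U₁,U₂), e(W₁,W₂)), where the covariance is computed on the product space (Ω², μ⊗μ). -/
open MeasureTheory

/-- The generalized distance covariance
`V²(U,W) = E[d(U₁,U₂)·e(W₁,W₂)] + E[d(U₁,U₂)]·E[e(W₁,W₂)] − 2·E[d(U₁,U₂)·e(W₁,W₃)]`,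
where `(U₁,W₁), (U₂,W₂), (U₃,W₃)` are the coordinates on the triple product `(Ω³, μ⊗μ⊗μ)`. -/
noncomputable def gdcov {Ω S T : Type*} [MeasurableSpace Ω] [MeasurableSpace S]
    [MeasurableSpace T] (μ : Measure Ω) (U : Ω → S) (W : Ω → T)
    (d : S × S → ℝ) (e : T × T → ℝ) : ℝ :=
  (∫ ω : Ω × Ω × Ω, d (U ω.1, U ω.2.1) * e (W ω.1, W ω.2.1) ∂(μ.prod (μ.prod μ))) +
    (∫ ω : Ω × Ω, d (U ω.1, U ω.2) ∂(μ.prod μ)) *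
      (∫ ω : Ω × Ω, e (W ω.1, W ω.2) ∂(μ.prod μ)) -
    2 * ∫ ω : Ω × Ω × Ω, d (U ω.1, U ω.2.1) * e (W ω.1, W ω.2.2) ∂(μ.prod (μ.prod μ))

lemma integrable_of_bdd' {α : Type*} [MeasurableSpace α] {μ : Measure α} [IsFiniteMeasure μ]
    {f : α → ℝ} (hf : Measurable f) {C : ℝ} (h : ∀ x, |f x| ≤ C) : Integrable f μ :=
  ⟨hf.aestronglyMeasurable,
    HasFiniteIntegral.of_bounded (C := C) (Filter.Eventually.of_forall fun x => by
      simpa [Real.norm_eq_abs] using h x)⟩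

/-- If `e` has constant row means under `W` (or `d` has constant row means under `U`), then
the generalized distance covariance collapses to the ordinary covariance of the pairwise
distances `d(U₁,U₂)` and `e(W₁,W₂)` on the product space `(Ω², μ⊗μ)`. -/
theorem gdcov_eq_cov {Ω S T : Type*} [MeasurableSpace Ω] [MeasurableSpace S]
    [MeasurableSpace T] (μ : Measure Ω) [IsProbabilityMeasure μ]
    (U : Ω → S) (W : Ω → T) (hU : Measurable U) (hW : Measurable W)
    (d : S × S → ℝ) (e : T × T → ℝ) (hd : Measurable d) (he : Measurable e)
    (hdbd : ∃ C, ∀ x, |d x| ≤ C) (hebd : ∃ C, ∀ x, |e x| ≤ C)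
    (hrow :
      (∀ᵐ u ∂(μ.map U),
          (∫ u', d (u, u') ∂(μ.map U)) = (∫ ω : Ω × Ω, d (U ω.1, U ω.2) ∂(μ.prod μ)) ∧
          (∫ u', d (u', u) ∂(μ.map U)) = ∫ ω : Ω × Ω, d (U ω.1, U ω.2) ∂(μ.prod μ)) ∨
      (∀ᵐ w ∂(μ.map W),
          (∫ w', e (w, w') ∂(μ.map W)) = (∫ ω : Ω × Ω, e (W ω.1, W ω.2) ∂(μ.prod μ)) ∧
          (∫ w', e (w', w) ∂(μ.map W)) = ∫ ω : Ω × Ω, e (W ω.1, W ω.2) ∂(μ.prod μ))) :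
    gdcov μ U W d e =
      (∫ ω : Ω × Ω, d (U ω.1, U ω.2) * e (W ω.1, W ω.2) ∂(μ.prod μ)) -
        (∫ ω : Ω × Ω, d (U ω.1, U ω.2) ∂(μ.prod μ)) *
          ∫ ω : Ω × Ω, e (W ω.1, W ω.2) ∂(μ.prod μ) := by
  obtain ⟨Cd, hCd⟩ := hdbd
  obtain ⟨Ce, hCe⟩ := hebd
  set Ed := ∫ ω : Ω × Ω, d (U ω.1, U ω.2) ∂(μ.prod μ) with hEd
  set Ee := ∫ ω : Ω × Ω, e (W ω.1, W ω.2) ∂(μ.prod μ) with hEe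
  -- measurability of the basic functions
  have hmd : Measurable (fun ω : Ω × Ω => d (U ω.1, U ω.2)) :=
    hd.comp ((hU.comp measurable_fst).prodMk (hU.comp measurable_snd))
  have hme : Measurable (fun ω : Ω × Ω => e (W ω.1, W ω.2)) :=
    he.comp ((hW.comp measurable_fst).prodMk (hW.comp measurable_snd))
  -- the map (ω₁,ω₂,ω₃) ↦ (ω₁,ω₂) pushes μ³ to μ²
  have hπ : Measurable (fun ω : Ω × Ω × Ω => (ω.1, ω.2.1)) :=
    measurable_fst.prodMk (measurable_fst.comp measurable_snd)
  have hmap : Measure.map (fun ω : Ω × Ω × Ω => (ω.1, ω.2.1)) (μ.prod (μ.prod μ)) = μ.prod μ := by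
    have : (fun ω : Ω × Ω × Ω => (ω.1, ω.2.1)) = Prod.map (id : Ω → Ω) Prod.fst := rfl
    rw [this, ← Measure.map_prod_map _ _ measurable_id measurable_fst,
      Measure.map_id, Measure.map_fst_prod]
    simp
  -- first triple integral reduces to a double integral
  have hT1 : (∫ ω : Ω × Ω × Ω, d (U ω.1, U ω.2.1) * e (W ω.1, W ω.2.1) ∂(μ.prod (μ.prod μ)))
      = ∫ ω : Ω × Ω, d (U ω.1, U ω.2) * e (W ω.1, W ω.2) ∂(μ.prod μ) := by
    have h := integral_map (μ := μ.prod (μ.prod μ)) (φ := fun ω : Ω × Ω × Ω => (ω.1, ω.2.1))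
      hπ.aemeasurable ((hmd.mul hme).aestronglyMeasurable)
    rw [hmap] at h
    exact h.symm
  -- integrability of the cross-term integrand on the triple product
  have hFmeas : Measurable (fun ω : Ω × Ω × Ω => d (U ω.1, U ω.2.1) * e (W ω.1, W ω.2.2)) :=
    (hd.comp ((hU.comp measurable_fst).prodMk
      (hU.comp (measurable_fst.comp measurable_snd)))).mul
      (he.comp ((hW.comp measurable_fst).prodMk
        (hW.comp (measurable_snd.comp measurable_snd))))
  have hFint : Integrable (fun ω : Ω × Ω × Ω => d (U ω.1, U ω.2.1) * e (W ω.1, W ω.2.2))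
      (μ.prod (μ.prod μ)) := by
    refine integrable_of_bdd' hFmeas (C := |Cd| * |Ce|) fun x => ?_
    rw [abs_mul]
    exact mul_le_mul ((hCd _).trans (le_abs_self _)) ((hCe _).trans (le_abs_self _))
      (abs_nonneg _) (abs_nonneg _)
  -- Fubini on the cross term
  have hcross : (∫ ω : Ω × Ω × Ω, d (U ω.1, U ω.2.1) * e (W ω.1, W ω.2.2) ∂(μ.prod (μ.prod μ)))
      = ∫ x, (∫ y, d (U x, U y) ∂μ) * (∫ z, e (W x, W z) ∂μ) ∂μ := by
    rw [integral_prod _ hFint]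
    refine integral_congr_ae (Filter.Eventually.of_forall fun x => ?_)
    exact integral_prod_mul (fun y => d (U x, U y)) (fun z => e (W x, W z))
  -- Ed and Ee as iterated integrals
  have hdint : Integrable (fun ω : Ω × Ω => d (U ω.1, U ω.2)) (μ.prod μ) :=
    integrable_of_bdd' hmd (fun x => hCd _)
  have heint : Integrable (fun ω : Ω × Ω => e (W ω.1, W ω.2)) (μ.prod μ) :=
    integrable_of_bdd' hme (fun x => hCe _)
  have hEd' : Ed = ∫ x, ∫ y, d (U x, U y) ∂μ ∂μ := by
    rw [hEd, integral_prod _ hdint]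
  have hEe' : Ee = ∫ x, ∫ z, e (W x, W z) ∂μ ∂μ := by
    rw [hEe, integral_prod _ heint]
  -- the cross term equals Ed * Ee in both cases
  have hcrossEq : (∫ ω : Ω × Ω × Ω, d (U ω.1, U ω.2.1) * e (W ω.1, W ω.2.2)
      ∂(μ.prod (μ.prod μ))) = Ed * Ee := by
    rcases hrow with hrowd | hrowe
    · -- d has constant row means: inner d-integral is a.e. Ed
      have h1 : ∀ᵐ x ∂μ, (∫ u', d (U x, u') ∂(μ.map U)) = Ed :=
        ae_of_ae_map hU.aemeasurable (hrowd.mono fun u hu => hu.1)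
      have h2 : ∀ᵐ x ∂μ, (∫ y, d (U x, U y) ∂μ) = Ed := by
        refine h1.mono fun x hx => ?_
        rw [← hx, integral_map hU.aemeasurable]
        exact (hd.comp (measurable_const.prodMk measurable_id)).aestronglyMeasurable
      rw [hcross, integral_congr_ae (h2.mono fun x hx => by rw [hx]),
        integral_const_mul, ← hEe']
    · -- e has constant row means: inner e-integral is a.e. Ee
      have h1 : ∀ᵐ x ∂μ, (∫ w', e (W x, w') ∂(μ.map W)) = Ee :=
        ae_of_ae_map hW.aemeasurable (hrowe.mono fun w hw => hw.1)
      have h2 : ∀ᵐ x ∂μ, (∫ z, e (W x, W z) ∂μ) = Ee := by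
        refine h1.mono fun x hx => ?_
        rw [← hx, integral_map hW.aemeasurable]
        exact (he.comp (measurable_const.prodMk measurable_id)).aestronglyMeasurable
      rw [hcross, integral_congr_ae (h2.mono fun x hx => by rw [hx]),
        integral_mul_const, ← hEd']
  rw [gdcov, hT1, hcrossEq, ← hEd, ← hEe]
  ring
end

section
/- Under the ρ-SBM edge mixture, the Pearson correlation of the two coordinates equals ((Σ_b w_b·p_b·q_b − p̄·q̄) + ρ·Σ_b w_b·s_b)/√(p̄(1−p̄)·q̄(1−q̄)), and (provided some w_b > 0) there exists a unique constant c, namely c = (Σ_b w_b·p_b·q_b − p̄·q̄)/√(p̄(1−p̄)·q̄(1−q̄)), such that the Pearson correlation equals c if and only if ρ = 0. The constant c is in general nonzero, reflecting the correlation induced by the common block structure. -/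
open MeasureTheory

/-- The unique distribution on `{0,1}²` with marginals `Bernoulli(p)`, `Bernoulli(q)` and
mass `r` at `(1,1)`. -/
noncomputable def bernoulliPairJoint (p q r : ℝ) : Measure (Bool × Bool) :=
  ENNReal.ofReal r • Measure.dirac (true, true) +
  ENNReal.ofReal (p - r) • Measure.dirac (true, false) +
  ENNReal.ofReal (q - r) • Measure.dirac (false, true) +
  ENNReal.ofReal (1 - p - q + r) • Measure.dirac (false, false)

/-- The ρ-SBM edge mixture `ν_ρ = Σ_b w_b · ν_b`, where `ν_b` has marginals
`Bernoulli(p_b)`, `Bernoulli(q_b)` and `(1,1)`-mass `p_b·q_b + ρ·s_b`. -/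
noncomputable def sbmEdgeMix (k : ℕ) (w p q s : Fin k → ℝ) (ρ : ℝ) :
    Measure (Bool × Bool) :=
  ∑ b : Fin k, ENNReal.ofReal (w b) • bernoulliPairJoint (p b) (q b) (p b * q b + ρ * s b)

/-- The covariance `Cov_{ν_ρ}(X,Y)` of the two coordinates under the ρ-SBM edge mixture. -/
noncomputable def sbmEdgeCov (k : ℕ) (w p q s : Fin k → ℝ) (ρ : ℝ) : ℝ :=
  (∫ x : Bool × Bool, (if x.1 then (1 : ℝ) else 0) * (if x.2 then (1 : ℝ) else 0)
      ∂(sbmEdgeMix k w p q s ρ)) -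
    (∫ x : Bool × Bool, (if x.1 then (1 : ℝ) else 0) ∂(sbmEdgeMix k w p q s ρ)) *
      ∫ x : Bool × Bool, (if x.2 then (1 : ℝ) else 0) ∂(sbmEdgeMix k w p q s ρ)

/-- The variance `Var_{ν_ρ}(X)` of the first coordinate under the ρ-SBM edge mixture. -/
noncomputable def sbmEdgeVarX (k : ℕ) (w p q s : Fin k → ℝ) (ρ : ℝ) : ℝ :=
  (∫ x : Bool × Bool, (if x.1 then (1 : ℝ) else 0) ^ 2 ∂(sbmEdgeMix k w p q s ρ)) -
    (∫ x : Bool × Bool, (if x.1 then (1 : ℝ) else 0) ∂(sbmEdgeMix k w p q s ρ)) ^ 2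

/-- The variance `Var_{ν_ρ}(Y)` of the second coordinate under the ρ-SBM edge mixture. -/
noncomputable def sbmEdgeVarY (k : ℕ) (w p q s : Fin k → ℝ) (ρ : ℝ) : ℝ :=
  (∫ x : Bool × Bool, (if x.2 then (1 : ℝ) else 0) ^ 2 ∂(sbmEdgeMix k w p q s ρ)) -
    (∫ x : Bool × Bool, (if x.2 then (1 : ℝ) else 0) ∂(sbmEdgeMix k w p q s ρ)) ^ 2

/-- The Pearson correlation of the two coordinates under the ρ-SBM edge mixture. -/
noncomputable def sbmEdgePearson (k : ℕ) (w p q s : Fin k → ℝ) (ρ : ℝ) : ℝ :=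
  sbmEdgeCov k w p q s ρ /
    Real.sqrt (sbmEdgeVarX k w p q s ρ * sbmEdgeVarY k w p q s ρ)

instance smul_dirac_fin (c : ℝ) (a : Bool × Bool) :
    IsFiniteMeasure (ENNReal.ofReal c • Measure.dirac a) := by
  constructor
  simp [lt_top_iff_ne_top, ENNReal.mul_ne_top, measure_ne_top]

lemma bpj_integral (p q r : ℝ) (h0 : 0 ≤ r) (hp : r ≤ p) (hq : r ≤ q)
    (h1 : p + q - 1 ≤ r) (f : Bool × Bool → ℝ) :
    ∫ x, f x ∂(bernoulliPairJoint p q r) =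
      r * f (true, true) + (p - r) * f (true, false) + (q - r) * f (false, true) +
        (1 - p - q + r) * f (false, false) := by
  have h : ∀ (c : ℝ) (a : Bool × Bool), 0 ≤ c →
      ∫ x, f x ∂(ENNReal.ofReal c • Measure.dirac a) = c * f a := by
    intro c a hc
    rw [integral_smul_measure, integral_dirac, smul_eq_mul, ENNReal.toReal_ofReal hc]
  have hint : ∀ (c : ℝ) (a : Bool × Bool), Integrable f (ENNReal.ofReal c • Measure.dirac a) :=
    fun c a => Integrable.of_finite
  rw [bernoulliPairJoint,
    integral_add_measure (((hint _ _).add_measure (hint _ _)).add_measure (hint _ _)) (hint _ _),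
    integral_add_measure ((hint _ _).add_measure (hint _ _)) (hint _ _),
    integral_add_measure (hint _ _) (hint _ _),
    h _ _ h0, h _ _ (by linarith), h _ _ (by linarith), h _ _ (by linarith)]

instance bpj_fin (p q r : ℝ) : IsFiniteMeasure (bernoulliPairJoint p q r) := by
  rw [bernoulliPairJoint]; infer_instance

instance smul_fin_meas (c : ℝ) (μ : Measure (Bool × Bool)) [IsFiniteMeasure μ] :
    IsFiniteMeasure (ENNReal.ofReal c • μ) := by
  constructor
  simp [lt_top_iff_ne_top, ENNReal.mul_ne_top, measure_ne_top]

lemma sbm_integral (k : ℕ) (w p q s : Fin k → ℝ) (ρ : ℝ)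
    (hw : ∀ b, 0 ≤ w b)
    (h0 : ∀ b, 0 ≤ p b * q b + ρ * s b)
    (hp : ∀ b, p b * q b + ρ * s b ≤ p b)
    (hq : ∀ b, p b * q b + ρ * s b ≤ q b)
    (h1 : ∀ b, p b + q b - 1 ≤ p b * q b + ρ * s b)
    (f : Bool × Bool → ℝ) :
    ∫ x, f x ∂(sbmEdgeMix k w p q s ρ) =
      ∑ b, w b * ((p b * q b + ρ * s b) * f (true, true) +
        (p b - (p b * q b + ρ * s b)) * f (true, false) +
        (q b - (p b * q b + ρ * s b)) * f (false, true) +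
        (1 - p b - q b + (p b * q b + ρ * s b)) * f (false, false)) := by
  rw [sbmEdgeMix, integral_finset_sum_measure (fun b _ => Integrable.of_finite)]
  refine Finset.sum_congr rfl fun b _ => ?_
  rw [integral_smul_measure, smul_eq_mul, ENNReal.toReal_ofReal (hw b),
    bpj_integral _ _ _ (h0 b) (hp b) (hq b) (h1 b) f]

/-- Under the ρ-SBM edge mixture, the Pearson correlation of the two coordinates equals
`((Σ_b w_b·p_b·q_b − p̄·q̄) + ρ·Σ_b w_b·s_b)/√(p̄(1−p̄)·q̄(1−q̄))`, and (provided some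
`w_b > 0`) there is a unique constant `c` — namely
`c = (Σ_b w_b·p_b·q_b − p̄·q̄)/√(p̄(1−p̄)·q̄(1−q̄))` — such that the Pearson correlation
equals `c` iff `ρ = 0`. -/
theorem sbmEdgePearson_formula_and_unique_const (k : ℕ) (w p q s : Fin k → ℝ)
    (hw : ∀ b, w b ∈ Set.Icc (0 : ℝ) 1) (hw1 : ∑ b, w b = 1)
    (hp : ∀ b, p b ∈ Set.Ioo (0 : ℝ) 1) (hq : ∀ b, q b ∈ Set.Ioo (0 : ℝ) 1)
    (hs : ∀ b, s b = Real.sqrt (p b * (1 - p b) * (q b * (1 - q b))))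
    (hpbar : (∑ b, w b * p b) ∈ Set.Ioo (0 : ℝ) 1)
    (hqbar : (∑ b, w b * q b) ∈ Set.Ioo (0 : ℝ) 1)
    (hpos : ∃ b, 0 < w b) :
    (∀ ρ ∈ {ρ : ℝ | ∀ b, p b * q b + ρ * s b ∈
        Set.Icc (max 0 (p b + q b - 1)) (min (p b) (q b))},
      sbmEdgePearson k w p q s ρ =
        (((∑ b, w b * (p b * q b)) - (∑ b, w b * p b) * ∑ b, w b * q b) +
            ρ * ∑ b, w b * s b) /
          Real.sqrt ((∑ b, w b * p b) * (1 - ∑ b, w b * p b) *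
            ((∑ b, w b * q b) * (1 - ∑ b, w b * q b)))) ∧
    (∃! c : ℝ, ∀ ρ ∈ {ρ : ℝ | ∀ b, p b * q b + ρ * s b ∈
        Set.Icc (max 0 (p b + q b - 1)) (min (p b) (q b))},
      (sbmEdgePearson k w p q s ρ = c ↔ ρ = 0)) ∧
    (∀ ρ ∈ {ρ : ℝ | ∀ b, p b * q b + ρ * s b ∈
        Set.Icc (max 0 (p b + q b - 1)) (min (p b) (q b))},
      (sbmEdgePearson k w p q s ρ =
          ((∑ b, w b * (p b * q b)) - (∑ b, w b * p b) * ∑ b, w b * q b) /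
            Real.sqrt ((∑ b, w b * p b) * (1 - ∑ b, w b * p b) *
              ((∑ b, w b * q b) * (1 - ∑ b, w b * q b))) ↔ ρ = 0)) := by
  set P := ∑ b, w b * p b with hP
  set Q := ∑ b, w b * q b with hQ
  set A := (∑ b, w b * (p b * q b)) - P * Q with hA
  set Sm := ∑ b, w b * s b with hSm
  set D := Real.sqrt (P * (1 - P) * (Q * (1 - Q))) with hD
  have hwn : ∀ b, 0 ≤ w b := fun b => (hw b).1
  have hDpos : 0 < D := Real.sqrt_pos.mpr
    (mul_pos (mul_pos hpbar.1 (by linarith [hpbar.2]))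
      (mul_pos hqbar.1 (by linarith [hqbar.2])))
  have hspos : ∀ b, 0 < s b := fun b => by
    rw [hs b]
    exact Real.sqrt_pos.mpr (mul_pos (mul_pos (hp b).1 (by linarith [(hp b).2]))
      (mul_pos (hq b).1 (by linarith [(hq b).2])))
  have hSmpos : 0 < Sm := by
    obtain ⟨b0, hb0⟩ := hpos
    exact Finset.sum_pos' (fun b _ => mul_nonneg (hwn b) (hspos b).le)
      ⟨b0, Finset.mem_univ _, mul_pos hb0 (hspos b0)⟩
  -- key formula
  have key : ∀ ρ ∈ {ρ : ℝ | ∀ b, p b * q b + ρ * s b ∈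
      Set.Icc (max 0 (p b + q b - 1)) (min (p b) (q b))},
      sbmEdgePearson k w p q s ρ = (A + ρ * Sm) / D := by
    intro ρ hρ
    simp only [Set.mem_setOf_eq] at hρ
    have h0 : ∀ b, 0 ≤ p b * q b + ρ * s b :=
      fun b => le_trans (le_max_left _ _) (hρ b).1
    have hpb : ∀ b, p b * q b + ρ * s b ≤ p b :=
      fun b => le_trans (hρ b).2 (min_le_left _ _)
    have hqb : ∀ b, p b * q b + ρ * s b ≤ q b :=
      fun b => le_trans (hρ b).2 (min_le_right _ _)
    have h1 : ∀ b, p b + q b - 1 ≤ p b * q b + ρ * s b :=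
      fun b => le_trans (le_max_right _ _) (hρ b).1
    have hXY : (∫ x : Bool × Bool, (if x.1 then (1 : ℝ) else 0) * (if x.2 then (1 : ℝ) else 0)
        ∂(sbmEdgeMix k w p q s ρ)) = ∑ b, w b * (p b * q b + ρ * s b) := by
      rw [sbm_integral k w p q s ρ hwn h0 hpb hqb h1
        (fun x => (if x.1 then (1 : ℝ) else 0) * (if x.2 then (1 : ℝ) else 0))]
      exact Finset.sum_congr rfl fun b _ => by norm_num
    have hX : (∫ x : Bool × Bool, (if x.1 then (1 : ℝ) else 0) ∂(sbmEdgeMix k w p q s ρ)) = P := by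
      rw [sbm_integral k w p q s ρ hwn h0 hpb hqb h1 (fun x => (if x.1 then (1 : ℝ) else 0))]
      exact Finset.sum_congr rfl fun b _ => by norm_num
    have hY : (∫ x : Bool × Bool, (if x.2 then (1 : ℝ) else 0) ∂(sbmEdgeMix k w p q s ρ)) = Q := by
      rw [sbm_integral k w p q s ρ hwn h0 hpb hqb h1 (fun x => (if x.2 then (1 : ℝ) else 0))]
      exact Finset.sum_congr rfl fun b _ => by norm_num
    have hX2 : (∫ x : Bool × Bool, (if x.1 then (1 : ℝ) else 0) ^ 2
        ∂(sbmEdgeMix k w p q s ρ)) = P := by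
      rw [sbm_integral k w p q s ρ hwn h0 hpb hqb h1 (fun x => (if x.1 then (1 : ℝ) else 0) ^ 2)]
      exact Finset.sum_congr rfl fun b _ => by norm_num
    have hY2 : (∫ x : Bool × Bool, (if x.2 then (1 : ℝ) else 0) ^ 2
        ∂(sbmEdgeMix k w p q s ρ)) = Q := by
      rw [sbm_integral k w p q s ρ hwn h0 hpb hqb h1 (fun x => (if x.2 then (1 : ℝ) else 0) ^ 2)]
      exact Finset.sum_congr rfl fun b _ => by norm_num
    have hsum : ∑ b, w b * (p b * q b + ρ * s b)
        = (∑ b, w b * (p b * q b)) + ρ * Sm := by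
      rw [hSm, Finset.mul_sum, ← Finset.sum_add_distrib]
      exact Finset.sum_congr rfl fun b _ => by ring
    have hcov : sbmEdgeCov k w p q s ρ = A + ρ * Sm := by
      rw [sbmEdgeCov, hXY, hX, hY, hsum, hA]; ring
    have hvx : sbmEdgeVarX k w p q s ρ = P - P ^ 2 := by
      rw [sbmEdgeVarX, hX2, hX]
    have hvy : sbmEdgeVarY k w p q s ρ = Q - Q ^ 2 := by
      rw [sbmEdgeVarY, hY2, hY]
    rw [sbmEdgePearson, hcov, hvx, hvy, hD]
    congr 2
    ring
  have h0mem : (0 : ℝ) ∈ {ρ : ℝ | ∀ b, p b * q b + ρ * s b ∈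
      Set.Icc (max 0 (p b + q b - 1)) (min (p b) (q b))} := by
    intro b
    simp only [zero_mul, add_zero, Set.mem_Icc]
    obtain ⟨hp1, hp2⟩ := hp b
    obtain ⟨hq1, hq2⟩ := hq b
    refine ⟨max_le (by positivity) (by nlinarith), le_min (by nlinarith) (by nlinarith)⟩
  have hiff : ∀ ρ, ((A + ρ * Sm) / D = A / D ↔ ρ = 0) := by
    intro ρ
    constructor
    · intro h
      have h2 : A + ρ * Sm = A := by
        field_simp at h
        linarith
      have h3 : ρ * Sm = 0 := by linarith
      exact (mul_eq_zero.mp h3).resolve_right hSmpos.ne'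
    · rintro rfl; rw [zero_mul, add_zero]
  refine ⟨key, ⟨A / D, fun ρ hρ => by rw [key ρ hρ]; exact hiff ρ, ?_⟩,
    fun ρ hρ => by rw [key ρ hρ]; exact hiff ρ⟩
  intro c' hc'
  have := (hc' 0 h0mem).2 rfl
  rw [key 0 h0mem] at this
  rw [← this, zero_mul, add_zero]
end

section
/- Validity of the block-permuted test statistic: under the hypotheses of the block permutation lemma (pairs (X_i,Y_i) mutually independent across i ∈ I, X_i independent of Y_i for each i, identical distributions within each block of z, and π a block-preserving bijection), for every measurable function T : ℝ^I × ℝ^I → ℝ the random variable T((X_{π(i)})_i, (Y_i)_i) has the same distribution as T((X_i)_i, (Y_i)_i). In particular, the distance covariance statistic computed from the block-permuted first graph and the second graph is equal in distribution to the statistic computed from the original pair. -/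
open MeasureTheory ProbabilityTheory

/-! The vectors `(X_i)_i` and `(Y_i)_i` are independent, with product laws `⊗ᵢ law(X_i)` and
`⊗ᵢ law(Y_i)`. Since `π` preserves the blocks, `law(X_{π i}) = law(X_i)`, so reindexing by `π`
preserves `⊗ᵢ law(X_i)`; hence `((X_{π i})_i, (Y_i)_i)` and `((X_i)_i, (Y_i)_i)` have the same
joint law, and so do their images under any measurable `T`. -/

lemma measurePreserving_comp_perm_pi {ι β : Type*} [Fintype ι] [MeasurableSpace β]
    (ν : ι → Measure β) [∀ i, SigmaFinite (ν i)] (σ : Equiv.Perm ι) (hν : ∀ i, ν (σ i) = ν i) :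
    MeasurePreserving (fun g : ι → β => g ∘ σ) (Measure.pi ν) (Measure.pi ν) := by
  have hν' : ∀ i, ν i = ν (σ.symm i) := fun i => by simpa using hν (σ.symm i)
  exact measurePreserving_arrowCongr' ν ν σ.symm (MeasurableEquiv.refl β)
    fun i => hν' i ▸ MeasurePreserving.id (ν i)

namespace ProbabilityTheory

variable {Ω ι α β : Type*} [MeasurableSpace Ω] [Fintype ι] [MeasurableSpace α]
  [MeasurableSpace β] {μ : Measure Ω} [IsProbabilityMeasure μ] {X : ι → Ω → α} {Y : ι → Ω → β}

lemma iIndepFun.map_prodMk_eq_pi_prod_pi (hX : ∀ i, Measurable (X i))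
    (hY : ∀ i, Measurable (Y i)) (hpairs : iIndepFun (fun i ω => (X i ω, Y i ω)) μ)
    (hXY : ∀ i, IndepFun (X i) (Y i) μ) :
    μ.map (fun ω => (fun i => X i ω, fun i => Y i ω)) =
      (Measure.pi fun i => μ.map (X i)).prod (Measure.pi fun i => μ.map (Y i)) := by
  have hpair_law : ∀ i, μ.map (fun ω => (X i ω, Y i ω)) = (μ.map (X i)).prod (μ.map (Y i)) :=
    fun i => (indepFun_iff_map_prod_eq_prod_map_map (hX i).aemeasurable
      (hY i).aemeasurable).mp (hXY i)
  have hjoint : μ.map (fun ω i => (X i ω, Y i ω)) =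
      Measure.pi fun i => (μ.map (X i)).prod (μ.map (Y i)) := by
    rw [hpairs.map_fun_eq_pi_map fun i => ((hX i).prodMk (hY i)).aemeasurable]
    simp only [hpair_law]
  have hmeas : Measurable fun ω i => (X i ω, Y i ω) := by fun_prop
  rw [← (measurePreserving_arrowProdEquivProdArrow α β ι _ _).map_eq, ← hjoint,
    Measure.map_map (MeasurableEquiv.measurable _) hmeas]
  rfl

lemma map_prodMk_comp_perm_eq (hX : ∀ i, Measurable (X i)) (hY : ∀ i, Measurable (Y i))
    (hpairs : iIndepFun (fun i ω => (X i ω, Y i ω)) μ) (hXY : ∀ i, IndepFun (X i) (Y i) μ)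
    (σ : Equiv.Perm ι) (hXσ : ∀ i, μ.map (X (σ i)) = μ.map (X i)) :
    μ.map (fun ω => (fun i => X (σ i) ω, fun i => Y i ω)) =
      μ.map (fun ω => (fun i => X i ω, fun i => Y i ω)) := by
  have hperm := measurePreserving_comp_perm_pi (fun i => μ.map (X i)) σ hXσ
  have hmeas : Measurable fun ω => (fun i => X i ω, fun i => Y i ω) := by fun_prop
  rw [show (fun ω => (fun i => X (σ i) ω, fun i => Y i ω)) =
      Prod.map (· ∘ σ) id ∘ fun ω => (fun i => X i ω, fun i => Y i ω) from rfl,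
    ← Measure.map_map (hperm.measurable.prodMap measurable_id) hmeas,
    iIndepFun.map_prodMk_eq_pi_prod_pi hX hY hpairs hXY,
    ← Measure.map_prod_map _ _ hperm.measurable measurable_id, hperm.map_eq, Measure.map_id]

end ProbabilityTheory

theorem block_permuted_statistic_eq_dist_general {Ω I : Type*} [MeasurableSpace Ω] [Fintype I]
    {k : ℕ} (z : I → Fin k)
    (μ : Measure Ω) [IsProbabilityMeasure μ]
    (X Y : I → Ω → ℝ) (hX : ∀ i, Measurable (X i)) (hY : ∀ i, Measurable (Y i))
    (hpairs : iIndepFun (fun i ω => (X i ω, Y i ω)) μ)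
    (hXY : ∀ i, IndepFun (X i) (Y i) μ)
    (hXd : ∀ i j, z i = z j → μ.map (X i) = μ.map (X j))
    (π : Equiv.Perm I) (hπ : ∀ i, z (π i) = z i) :
    ∀ T : (I → ℝ) × (I → ℝ) → ℝ, Measurable T →
      μ.map (fun ω => T ((fun i => X (π i) ω), (fun i => Y i ω))) =
        μ.map (fun ω => T ((fun i => X i ω), (fun i => Y i ω))) := by
  intro T hT
  have hjoint := map_prodMk_comp_perm_eq hX hY hpairs hXY π fun i => hXd _ _ (hπ i)
  calc μ.map (fun ω => T ((fun i => X (π i) ω), (fun i => Y i ω)))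
      = (μ.map fun ω => ((fun i => X (π i) ω), (fun i => Y i ω))).map T :=
        (Measure.map_map hT (by fun_prop)).symm
    _ = (μ.map fun ω => ((fun i => X i ω), (fun i => Y i ω))).map T := by rw [hjoint]
    _ = μ.map (fun ω => T ((fun i => X i ω), (fun i => Y i ω))) :=
        Measure.map_map hT (by fun_prop)

/-- Validity of the block-permuted test statistic: under the hypotheses of the block
permutation lemma (pairs `(X_i,Y_i)` mutually independent, `X_i ⟂ Y_i` for each `i`,
identical distributions within each block of `z`, and `π` a block-preserving permutation),
every measurable statistic `T : ℝ^I × ℝ^I → ℝ` satisfies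
`T((X_{π i})_i, (Y_i)_i) =ᵈ T((X_i)_i, (Y_i)_i)`; in particular this holds for the
distance covariance statistic computed from the block-permuted first graph. -/
theorem block_permuted_statistic_eq_dist {Ω I : Type*} [MeasurableSpace Ω] [Fintype I]
    {k : ℕ} (z : I → Fin k)
    (μ : Measure Ω) [IsProbabilityMeasure μ]
    (X Y : I → Ω → ℝ) (hX : ∀ i, Measurable (X i)) (hY : ∀ i, Measurable (Y i))
    (hpairs : iIndepFun (fun i ω => (X i ω, Y i ω)) μ)
    (hXY : ∀ i, IndepFun (X i) (Y i) μ)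
    (hXd : ∀ i j, z i = z j → μ.map (X i) = μ.map (X j))
    (hYd : ∀ i j, z i = z j → μ.map (Y i) = μ.map (Y j))
    (π : Equiv.Perm I) (hπ : ∀ i, z (π i) = z i) :
    ∀ T : (I → ℝ) × (I → ℝ) → ℝ, Measurable T →
      μ.map (fun ω => T ((fun i => X (π i) ω), (fun i => Y i ω))) =
        μ.map (fun ω => T ((fun i => X i ω), (fun i => Y i ω))) :=
  block_permuted_statistic_eq_dist_general z μ X Y hX hY hpairs hXY hXd π hπ
end
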